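/- arXiv:2012.09729 — 2 statements merged into one kernel-verified Lean document; each statement's English description precedes it below -/
import Mathlib

section
/- Let μ be a probability measure on ℝ with cdf F and quantile function F^{-1}. Then for almost every (v,z) with respect to the product of the uniform distribution on [0,1] and μ, one has F^{-1}(F(z−) + v·μ({z})) = z. -/
open MeasureTheory ProbabilityTheory Filter Set

/-- Left-continuous quantile function of `μ`. -/
noncomputable def qf (μ : Measure ℝ) (u : ℝ) : ℝ := sInf {x : ℝ | u ≤ cdf μ x}

/-!
For μ-almost every `z` the cdf `F` is strictly smaller than `F z` to the left of `z`: the points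
admitting a μ-null interval `(q, z]` with `q` rational form, for each `q`, a μ-null interval. At
such a `z` and for `0 < v ≤ 1`, the level `u = F(z−) + v μ{z}` satisfies `u ≤ F z` and `F x < u`
for `x < z` (by the jump if `μ{z} > 0`, by strict growth if `μ{z} = 0`), so `z` is the least
solution of `u ≤ F x`.
-/

theorem measure_setOf_lt_measure_Ioc_eq_zero (μ : Measure ℝ) (a : ℝ) :
    μ {z | a < z ∧ μ (Ioc a z) = 0} = 0 := by
  set T := {z | a < z ∧ μ (Ioc a z) = 0}
  by_cases hmax : ∃ m ∈ T, ∀ z ∈ T, z ≤ m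
  · obtain ⟨m, hmT, hm⟩ := hmax
    exact measure_mono_null (t := Ioc a m) (fun z hz => ⟨hz.1, hm z hz⟩) hmT.2
  · push Not at hmax
    have hT : T ⊆ ⋃ (r : ℚ) (_ : (r : ℝ) ∈ T), Ioc a r := by
      intro z hz
      obtain ⟨w, hwT, hzw⟩ := hmax z hz
      obtain ⟨r, hzr, hrw⟩ := exists_rat_btwn hzw
      have hrT : (r : ℝ) ∈ T :=
        ⟨hz.1.trans hzr, measure_mono_null (Ioc_subset_Ioc_right hrw.le) hwT.2⟩
      exact mem_biUnion hrT ⟨hz.1, hzr.le⟩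
    exact measure_mono_null hT (measure_iUnion_null fun r => measure_iUnion_null fun hr => hr.2)

theorem ae_forall_lt_measure_Ioc_ne_zero (μ : Measure ℝ) :
    ∀ᵐ z ∂μ, ∀ x < z, μ (Ioc x z) ≠ 0 := by
  refine measure_mono_null (fun z hz => ?_)
    (measure_iUnion_null fun q : ℚ => measure_setOf_lt_measure_Ioc_eq_zero μ q)
  obtain ⟨x, hxz, hx⟩ : ∃ x < z, μ (Ioc x z) = 0 := by simpa using hz
  obtain ⟨q, hxq, hqz⟩ := exists_rat_btwn hxz
  exact mem_iUnion.2 ⟨q, hqz, measure_mono_null (Ioc_subset_Ioc_left hxq.le) hx⟩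

theorem qf_eq_of_le_cdf_of_forall_lt {μ : Measure ℝ} {u z : ℝ} (hu : u ≤ cdf μ z)
    (hlt : ∀ x < z, cdf μ x < u) : qf μ u = z :=
  IsLeast.csInf_eq ⟨hu, fun _ hx => not_lt.1 fun hxz => (hlt _ hxz).not_ge hx⟩

section cdf

variable (μ : Measure ℝ) [IsProbabilityMeasure μ]

theorem measure_Ioc_eq_ofReal_cdf_sub (x z : ℝ) :
    μ (Ioc x z) = ENNReal.ofReal (cdf μ z - cdf μ x) := by
  rw [← (cdf μ).measure_Ioc, measure_cdf]

theorem measure_singleton_toReal_eq_cdf_sub_leftLim (z : ℝ) :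
    (μ {z}).toReal = cdf μ z - Function.leftLim (cdf μ) z := by
  rw [← ENNReal.toReal_ofReal (sub_nonneg.2 ((monotone_cdf μ).leftLim_le le_rfl)),
    ← (cdf μ).measure_singleton, measure_cdf]

theorem ae_forall_lt_cdf_lt : ∀ᵐ z ∂μ, ∀ x < z, cdf μ x < cdf μ z := by
  filter_upwards [ae_forall_lt_measure_Ioc_ne_zero μ] with z hz x hxz
  have hpos := hz x hxz
  rw [measure_Ioc_eq_ofReal_cdf_sub, ne_eq, ENNReal.ofReal_eq_zero, not_le] at hpos
  linarith

variable {μ}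

theorem qf_leftLim_cdf_add_mul {z v : ℝ} (hz : ∀ x < z, cdf μ x < cdf μ z) (hv₀ : 0 < v)
    (hv₁ : v ≤ 1) : qf μ (Function.leftLim (cdf μ) z + v * (μ {z}).toReal) = z := by
  have hjump := measure_singleton_toReal_eq_cdf_sub_leftLim μ z
  have hatom : 0 ≤ (μ {z}).toReal := ENNReal.toReal_nonneg
  refine qf_eq_of_le_cdf_of_forall_lt (by nlinarith) fun x hxz => ?_
  have hleft : cdf μ x ≤ Function.leftLim (cdf μ) z := (monotone_cdf μ).le_leftLim hxz
  rcases hatom.eq_or_lt with hzero | hpos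
  · rw [← hzero, mul_zero, add_zero]
    linarith [hz x hxz]
  · nlinarith

end cdf

theorem stmt6 (μ : Measure ℝ) [IsProbabilityMeasure μ] :
    ∀ᵐ p : ℝ × ℝ ∂((volume.restrict (Set.Icc (0 : ℝ) 1)).prod μ),
      qf μ (Function.leftLim (fun x => cdf μ x) p.2 + p.1 * (μ {p.2}).toReal) = p.2 := by
  have hv : ∀ᵐ v ∂(volume.restrict (Icc (0 : ℝ) 1)), v ∈ Ioc 0 1 := by
    rw [Measure.restrict_congr_set Ioc_ae_eq_Icc.symm]
    exact ae_restrict_mem measurableSet_Ioc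
  filter_upwards [Measure.quasiMeasurePreserving_fst.ae hv,
    Measure.quasiMeasurePreserving_snd.ae (ae_forall_lt_cdf_lt μ)] with p hp₁ hp₂
  exact qf_leftLim_cdf_add_mul hp₂ hp₁.1 hp₁.2
end

section
/- Let μ be a probability measure on ℝ with cdf F and quantile function F^{-1}, and β > 0. Then sup_{x≥0} x^β (F(−x) + 1 − F(x)) < ∞ if and only if sup_{u∈(0,1/2]} u^{1/β}(F^{-1}(1−u) − F^{-1}(u)) < ∞; moreover sup_{u∈(0,1/2]} u^{1/β}(F^{-1}(1−u) − F^{-1}(u)) ≤ (sup_{x≥0} x^β F(−x))^{1/β} + (sup_{x≥0} x^β (1−F(x)))^{1/β}. -/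
/-!
The quantile function is the generalized inverse of the right-continuous cdf `F`, so for
`0 < u < 1` we have `qf u ≤ x ↔ u ≤ F x`. If `x ^ β * (1 - F x) ≤ B` for `x ≥ 0`, then
`1 - F y < u` for every `y > (B / u) ^ (1 / β)`, whence `qf (1 - u) ≤ (B / u) ^ (1 / β)`;
symmetrically `qf u ≥ -(A / u) ^ (1 / β)`, and multiplying the difference by `u ^ (1 / β)`
gives `A ^ (1 / β) + B ^ (1 / β)`. Conversely, if `1 - F x = q > 0` then
`x ≤ qf (1 - q / 2)` and `qf (q / 2) ≤ qf (1 / 2)`, so a bound on the quantile spread at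
`u = q / 2` bounds `q ^ (1 / β) * x`, that is `q * x ^ β`; the left tail is the same.
-/

open MeasureTheory ProbabilityTheory Filter Set

section RealInequalities

variable {β : ℝ}

lemma lt_of_rpow_mul_le {M u y t : ℝ} (hβ : 0 < β) (hM : 0 ≤ M) (hu : 0 < u)
    (hy : (M / u) ^ (1 / β) < y) (h : y ^ β * t ≤ M) : t < u := by
  have hy0 : 0 < y := (Real.rpow_nonneg (div_nonneg hM hu.le) _).trans_lt hy
  have hMu : M / u < y ^ β := by
    have := Real.rpow_lt_rpow (Real.rpow_nonneg (div_nonneg hM hu.le) _) hy hβ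
    rwa [one_div, Real.rpow_inv_rpow (div_nonneg hM hu.le) hβ.ne'] at this
  rw [div_lt_iff₀ hu] at hMu
  exact lt_of_mul_lt_mul_left (h.trans_lt (by linarith)) (Real.rpow_nonneg hy0.le _)

lemma nonneg_of_forall_rpow_mul_le {f : ℝ → ℝ} {M : ℝ} (hβ : 0 < β)
    (h : ∀ x, 0 ≤ x → x ^ β * f x ≤ M) : 0 ≤ M := by
  simpa [Real.zero_rpow hβ.ne'] using h 0 le_rfl

lemma rpow_mul_div_rpow {M u : ℝ} (hM : 0 ≤ M) (hu : 0 < u) :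
    u ^ (1 / β) * (M / u) ^ (1 / β) = M ^ (1 / β) := by
  rw [← Real.mul_rpow hu.le (div_nonneg hM hu.le), mul_div_cancel₀ M hu.ne']

lemma rpow_mul_le_of_half_rpow_mul_sub_le {q x a C : ℝ} (hβ : 0 < β) (hq : q ≤ 1)
    (hx : 0 ≤ x) (ha : 0 ≤ a) (hC : 0 ≤ C)
    (h : 0 < q → (q / 2) ^ (1 / β) * (x - a) ≤ C) :
    x ^ β * q ≤ (a + 2 ^ (1 / β) * C) ^ β := by
  have hD : 0 ≤ a + 2 ^ (1 / β) * C := by positivity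
  rcases le_or_gt q 0 with hq0 | hq0
  · exact (mul_nonpos_of_nonneg_of_nonpos (Real.rpow_nonneg hx _) hq0).trans
      (Real.rpow_nonneg hD _)
  have hqβ : 0 < q ^ (1 / β) := Real.rpow_pos_of_pos hq0 _
  have hqβ_le : q ^ (1 / β) ≤ 1 := Real.rpow_le_one hq0.le hq (by positivity)
  have htwo : 0 < (2 : ℝ) ^ (1 / β) := by positivity
  have hspread : q ^ (1 / β) * (x - a) ≤ 2 ^ (1 / β) * C := by
    have := h hq0
    rw [Real.div_rpow hq0.le zero_le_two, div_mul_eq_mul_div, div_le_iff₀ htwo] at this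
    linarith
  have hbound : q ^ (1 / β) * x ≤ a + 2 ^ (1 / β) * C := by nlinarith
  calc x ^ β * q = (q ^ (1 / β) * x) ^ β := by
        rw [Real.mul_rpow hqβ.le hx, one_div, Real.rpow_inv_rpow hq0.le hβ.ne', mul_comm]
    _ ≤ (a + 2 ^ (1 / β) * C) ^ β :=
        Real.rpow_le_rpow (mul_nonneg hqβ.le hx) hbound hβ.le

end RealInequalities

section Quantile

variable (μ : Measure ℝ) {u v x : ℝ}

lemma nonempty_setOf_le_cdf (hu : u < 1) : {x : ℝ | u ≤ cdf μ x}.Nonempty :=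
  ((tendsto_cdf_atTop μ).eventually_const_le hu).exists

lemma bddBelow_setOf_le_cdf (hu : 0 < u) : BddBelow {x : ℝ | u ≤ cdf μ x} := by
  obtain ⟨y, hy⟩ := eventually_atBot.mp ((tendsto_cdf_atBot μ).eventually_lt_const hu)
  exact ⟨y, fun x hx => le_of_not_gt fun hxy => (hy x hxy.le).not_ge hx⟩

lemma le_cdf_qf (hu1 : u < 1) : u ≤ cdf μ (qf μ u) := by
  rw [← (cdf μ).iInf_Ioi_eq]
  refine le_ciInf fun ⟨x, hx⟩ => ?_
  obtain ⟨s, hs, hsx⟩ := exists_lt_of_csInf_lt (nonempty_setOf_le_cdf μ hu1) hx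
  exact hs.trans ((cdf μ).mono hsx.le)

lemma qf_le_iff (hu0 : 0 < u) (hu1 : u < 1) : qf μ u ≤ x ↔ u ≤ cdf μ x :=
  ⟨fun h => (le_cdf_qf μ hu1).trans ((cdf μ).mono h),
    fun h => csInf_le (bddBelow_setOf_le_cdf μ hu0) h⟩

lemma qf_mono (hu0 : 0 < u) (huv : u ≤ v) (hv1 : v < 1) : qf μ u ≤ qf μ v :=
  (qf_le_iff μ hu0 (huv.trans_lt hv1)).2 (huv.trans (le_cdf_qf μ hv1))

variable {β A B : ℝ}

lemma qf_one_sub_le_of_tail (hβ : 0 < β)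
    (hB : ∀ x, 0 ≤ x → x ^ β * (1 - cdf μ x) ≤ B) (hu0 : 0 < u) (hu1 : u < 1) :
    qf μ (1 - u) ≤ (B / u) ^ (1 / β) := by
  have hB0 : 0 ≤ B := nonneg_of_forall_rpow_mul_le hβ hB
  refine le_of_forall_gt_imp_ge_of_dense fun y hy => ?_
  have hy0 : 0 ≤ y := (Real.rpow_nonneg (div_nonneg hB0 hu0.le) _).trans hy.le
  rw [qf_le_iff μ (by linarith) (by linarith)]
  linarith [lt_of_rpow_mul_le hβ hB0 hu0 hy (hB y hy0)]

lemma neg_le_qf_of_tail (hβ : 0 < β)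
    (hA : ∀ x, 0 ≤ x → x ^ β * cdf μ (-x) ≤ A) (hu0 : 0 < u) (hu1 : u < 1) :
    -(A / u) ^ (1 / β) ≤ qf μ u := by
  have hA0 : 0 ≤ A := nonneg_of_forall_rpow_mul_le hβ hA
  by_contra! hlt
  have hy : (A / u) ^ (1 / β) < -qf μ u := by linarith
  have hcdf := hA (-qf μ u) ((Real.rpow_nonneg (div_nonneg hA0 hu0.le) _).trans hy.le)
  rw [neg_neg] at hcdf
  exact (lt_of_rpow_mul_le hβ hA0 hu0 hy hcdf).not_ge (le_cdf_qf μ hu1)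

lemma rpow_mul_qf_sub_le_of_tails (hβ : 0 < β)
    (hA : ∀ x, 0 ≤ x → x ^ β * cdf μ (-x) ≤ A)
    (hB : ∀ x, 0 ≤ x → x ^ β * (1 - cdf μ x) ≤ B) (hu0 : 0 < u) (hu1 : u < 1) :
    u ^ (1 / β) * (qf μ (1 - u) - qf μ u) ≤ A ^ (1 / β) + B ^ (1 / β) := by
  have hA0 : 0 ≤ A := nonneg_of_forall_rpow_mul_le hβ hA
  have hB0 : 0 ≤ B := nonneg_of_forall_rpow_mul_le hβ hB
  have hspread : qf μ (1 - u) - qf μ u ≤ (A / u) ^ (1 / β) + (B / u) ^ (1 / β) := by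
    linarith [qf_one_sub_le_of_tail μ hβ hB hu0 hu1, neg_le_qf_of_tail μ hβ hA hu0 hu1]
  calc u ^ (1 / β) * (qf μ (1 - u) - qf μ u)
      ≤ u ^ (1 / β) * ((A / u) ^ (1 / β) + (B / u) ^ (1 / β)) :=
        mul_le_mul_of_nonneg_left hspread (Real.rpow_nonneg hu0.le _)
    _ = A ^ (1 / β) + B ^ (1 / β) := by
        rw [mul_add, rpow_mul_div_rpow hA0 hu0, rpow_mul_div_rpow hB0 hu0]

variable {C : ℝ}
  (hC : ∀ u ∈ Set.Ioc (0 : ℝ) (1 / 2), u ^ (1 / β) * (qf μ (1 - u) - qf μ u) ≤ C)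
include hC

lemma nonneg_of_qf_spread_le : 0 ≤ C := by
  have h := hC (1 / 2) ⟨by norm_num, le_rfl⟩
  norm_num at h
  exact h

lemma rpow_mul_one_sub_cdf_le_of_qf_spread (hβ : 0 < β) (hx : 0 ≤ x) :
    x ^ β * (1 - cdf μ x) ≤ (|qf μ (1 / 2)| + 2 ^ (1 / β) * C) ^ β := by
  refine rpow_mul_le_of_half_rpow_mul_sub_le hβ (by linarith [cdf_nonneg μ x]) hx
    (abs_nonneg _) (nonneg_of_qf_spread_le μ hC) fun hq => ?_
  set u := (1 - cdf μ x) / 2 with hu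
  have hu0 : 0 < u := by positivity
  have hu2 : u ≤ 1 / 2 := by linarith [hu, cdf_nonneg μ x]
  have hx_le : x ≤ qf μ (1 - u) :=
    le_of_not_gt fun h => by linarith [hu, (qf_le_iff μ (by linarith) (by linarith)).1 h.le]
  have hqf_le : qf μ u ≤ qf μ (1 / 2) := qf_mono μ hu0 hu2 (by norm_num)
  calc u ^ (1 / β) * (x - |qf μ (1 / 2)|) ≤ u ^ (1 / β) * (qf μ (1 - u) - qf μ u) :=
        mul_le_mul_of_nonneg_left (by linarith [le_abs_self (qf μ (1 / 2))]) (by positivity)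
    _ ≤ C := hC u ⟨hu0, hu2⟩

lemma rpow_mul_cdf_neg_le_of_qf_spread (hβ : 0 < β) (hx : 0 ≤ x) :
    x ^ β * cdf μ (-x) ≤ (|qf μ (1 / 2)| + 2 ^ (1 / β) * C) ^ β := by
  refine rpow_mul_le_of_half_rpow_mul_sub_le hβ (cdf_le_one μ _) hx
    (abs_nonneg _) (nonneg_of_qf_spread_le μ hC) fun hp => ?_
  set u := cdf μ (-x) / 2 with hu
  have hu0 : 0 < u := by positivity
  have hu2 : u ≤ 1 / 2 := by linarith [hu, cdf_le_one μ (-x)]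
  have hqf_le : qf μ u ≤ -x := (qf_le_iff μ hu0 (by linarith)).2 (by linarith [hu])
  have hle_qf : qf μ (1 / 2) ≤ qf μ (1 - u) :=
    qf_mono μ (by norm_num) (by linarith) (by linarith [hu])
  calc u ^ (1 / β) * (x - |qf μ (1 / 2)|) ≤ u ^ (1 / β) * (qf μ (1 - u) - qf μ u) :=
        mul_le_mul_of_nonneg_left (by linarith [neg_abs_le (qf μ (1 / 2))]) (by positivity)
    _ ≤ C := hC u ⟨hu0, hu2⟩

end Quantile

theorem stmt12_general (μ : Measure ℝ) (β : ℝ) (hβ : 0 < β) :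
    ((∃ C : ℝ, ∀ x : ℝ, 0 ≤ x → x ^ β * (cdf μ (-x) + 1 - cdf μ x) ≤ C) ↔
      (∃ C : ℝ, ∀ u ∈ Set.Ioc (0 : ℝ) (1 / 2),
        u ^ (1 / β) * (qf μ (1 - u) - qf μ u) ≤ C)) ∧
    (BddAbove ((fun x : ℝ => x ^ β * cdf μ (-x)) '' Set.Ici 0) →
      BddAbove ((fun x : ℝ => x ^ β * (1 - cdf μ x)) '' Set.Ici 0) →
      ∀ u ∈ Set.Ioc (0 : ℝ) (1 / 2),
        u ^ (1 / β) * (qf μ (1 - u) - qf μ u) ≤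
          (sSup ((fun x : ℝ => x ^ β * cdf μ (-x)) '' Set.Ici 0)) ^ (1 / β)
          + (sSup ((fun x : ℝ => x ^ β * (1 - cdf μ x)) '' Set.Ici 0)) ^ (1 / β)) := by
  have hu1 : ∀ u ∈ Set.Ioc (0 : ℝ) (1 / 2), u < 1 := fun u hu => by linarith [hu.2]
  refine ⟨⟨fun ⟨C, hC⟩ => ?_, fun ⟨C, hC⟩ => ?_⟩, fun hA hB u hu => ?_⟩
  · have hA : ∀ x, 0 ≤ x → x ^ β * cdf μ (-x) ≤ C := fun x hx => by
      nlinarith [hC x hx, cdf_le_one μ x, Real.rpow_nonneg hx β]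
    have hB : ∀ x, 0 ≤ x → x ^ β * (1 - cdf μ x) ≤ C := fun x hx => by
      nlinarith [hC x hx, cdf_nonneg μ (-x), Real.rpow_nonneg hx β]
    exact ⟨C ^ (1 / β) + C ^ (1 / β),
      fun u hu => rpow_mul_qf_sub_le_of_tails μ hβ hA hB hu.1 (hu1 u hu)⟩
  · refine ⟨2 * (|qf μ (1 / 2)| + 2 ^ (1 / β) * C) ^ β, fun x hx => ?_⟩
    rw [add_sub_assoc, mul_add, two_mul]
    exact add_le_add (rpow_mul_cdf_neg_le_of_qf_spread μ hC hβ hx)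
      (rpow_mul_one_sub_cdf_le_of_qf_spread μ hC hβ hx)
  · exact rpow_mul_qf_sub_le_of_tails μ hβ (fun x hx => le_csSup hA ⟨x, hx, rfl⟩)
      (fun x hx => le_csSup hB ⟨x, hx, rfl⟩) hu.1 (hu1 u hu)

theorem stmt12 (μ : Measure ℝ) [IsProbabilityMeasure μ] (β : ℝ) (hβ : 0 < β) :
    ((∃ C : ℝ, ∀ x : ℝ, 0 ≤ x → x ^ β * (cdf μ (-x) + 1 - cdf μ x) ≤ C) ↔
      (∃ C : ℝ, ∀ u ∈ Set.Ioc (0 : ℝ) (1 / 2),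
        u ^ (1 / β) * (qf μ (1 - u) - qf μ u) ≤ C)) ∧
    (BddAbove ((fun x : ℝ => x ^ β * cdf μ (-x)) '' Set.Ici 0) →
      BddAbove ((fun x : ℝ => x ^ β * (1 - cdf μ x)) '' Set.Ici 0) →
      ∀ u ∈ Set.Ioc (0 : ℝ) (1 / 2),
        u ^ (1 / β) * (qf μ (1 - u) - qf μ u) ≤
          (sSup ((fun x : ℝ => x ^ β * cdf μ (-x)) '' Set.Ici 0)) ^ (1 / β)
          + (sSup ((fun x : ℝ => x ^ β * (1 - cdf μ x)) '' Set.Ici 0)) ^ (1 / β)) :=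
  stmt12_general μ β hβ
end
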